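/- Let R be an integral domain and f ∈ R nonzero and non-invertible. Then the unit group of S = R[u,v]/(uv - f) equals the image of the unit group of R; in particular, the images of u and v in S are not invertible. -/

import Mathlib

/-!
Sending `u ↦ T` and `v ↦ f T⁻¹` embeds `S` into the Laurent polynomial ring `R[T, T⁻¹]`:
every element of `S` can be written as `p(u) + v q(v)`, whose image has coefficient `pₙ` in
degree `n ≥ 0` and `q_j f^(j+1)` in degree `-(j+1)`, and `f` is a nonzerodivisor. Over a domain
the units of `R[T, T⁻¹]` are the monomials `r Tᵉ` with `r ∈ Rˣ`. Since the image of `S` has all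
its negative-degree coefficients divisible by the non-unit `f`, a unit of `S` and its inverse,
mapping to `r Tᵉ` and `r⁻¹ T⁻ᵉ`, force `e = 0`.
-/

open MvPolynomial

/-- The suspension ring `S = R[u,v]/(uv - f)`. -/
abbrev Susp (R : Type*) [CommRing R] (f : R) : Type _ :=
  MvPolynomial (Fin 2) R ⧸
    Ideal.span {(X 0 * X 1 - C f : MvPolynomial (Fin 2) R)}

/-- The image of the variable `u` in `S`. -/
noncomputable abbrev suspU (R : Type*) [CommRing R] (f : R) : Susp R f :=
  Ideal.Quotient.mk _ (X 0)

/-- The image of the variable `v` in `S`. -/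
noncomputable abbrev suspV (R : Type*) [CommRing R] (f : R) : Susp R f :=
  Ideal.Quotient.mk _ (X 1)

open scoped Polynomial LaurentPolynomial

namespace Polynomial

variable {R : Type*}

theorem coeff_toLaurent_natCast [Semiring R] (p : R[X]) (n : ℕ) :
    (toLaurent p).coeff n = p.coeff n :=
  Finsupp.mapDomain_apply (Nat.castEmbedding (R := ℤ)).injective _ n

theorem coeff_toLaurent_of_neg [Semiring R] (p : R[X]) {m : ℤ} (hm : m < 0) :
    (toLaurent p).coeff m = 0 :=
  Finsupp.mapDomain_of_notMem_range _ _ (by rintro ⟨n, rfl⟩; exact (Int.natCast_nonneg n).not_gt hm)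

theorem aeval_eq_mul_aeval_divX_add [CommSemiring R] {A : Type*} [Semiring A] [Algebra R A]
    (x : A) (p : R[X]) : aeval x p = x * aeval x p.divX + algebraMap R A (p.coeff 0) := by
  conv_lhs => rw [← X_mul_divX_add p]
  rw [map_add, map_mul, aeval_X, aeval_C]

theorem exists_eq_C_mul_X_pow_of_mul_eq_X_pow [CommRing R] [IsDomain R] {p q : R[X]} {k : ℕ}
    (h : p * q = X ^ k) : ∃ r : R, IsUnit r ∧ ∃ j : ℕ, p = C r * X ^ j := by
  induction k generalizing p q with
  | zero =>
    obtain ⟨r, hr, rfl⟩ := isUnit_iff.mp (IsUnit.of_mul_eq_one _ (h.trans (pow_zero _)))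
    exact ⟨r, hr, 0, by rw [pow_zero, mul_one]⟩
  | succ k ih =>
    have hX : X ∣ p * q := h ▸ dvd_pow_self _ k.succ_ne_zero
    rcases prime_X.dvd_or_dvd hX with ⟨p, rfl⟩ | ⟨q, rfl⟩
    · obtain ⟨r, hr, j, rfl⟩ := ih (p := p) (q := q) <|
        mul_left_cancel₀ X_ne_zero (by rw [← mul_assoc, h, pow_succ'])
      exact ⟨r, hr, j + 1, by ring⟩
    · exact ih (q := q) <| mul_left_cancel₀ X_ne_zero (by rw [mul_left_comm, h, pow_succ'])

end Polynomial

namespace LaurentPolynomial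

variable {R : Type*}

theorem coeff_C_mul_T [Semiring R] (r : R) (n m : ℤ) :
    (C r * T n).coeff m = if n = m then r else 0 := by
  rw [← single_eq_C_mul_T, AddMonoidAlgebra.coeff_single, Finsupp.single_apply]

theorem coeff_aeval_C_mul_T_neg_one [CommSemiring R] (a : R) (q : R[X]) (m : ℤ) :
    (Polynomial.aeval (C a * T (-1)) q).coeff m =
      if m ≤ 0 then q.coeff (-m).toNat * a ^ (-m).toNat else 0 := by
  induction q using Polynomial.induction_on' with
  | add p q hp hq =>
    rw [map_add, AddMonoidAlgebra.coeff_add, Finsupp.add_apply, hp, hq]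
    split_ifs <;> simp [add_mul]
  | monomial n b =>
    rw [Polynomial.aeval_monomial, mul_pow, ← map_pow, T_pow, ← mul_assoc, ← C_eq_algebraMap,
      ← map_mul, coeff_C_mul_T, Polynomial.coeff_monomial]
    split_ifs <;> first | omega | simp_all

theorem exists_eq_C_mul_T_of_isUnit [CommRing R] [IsDomain R] {g : R[T;T⁻¹]} (hg : IsUnit g) :
    ∃ r : R, IsUnit r ∧ ∃ e : ℤ, g = C r * T e := by
  obtain ⟨h, hgh⟩ := hg.exists_right_inv
  obtain ⟨m, p, hp⟩ := exists_T_pow g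
  obtain ⟨n, q, hq⟩ := exists_T_pow h
  have hpq : p * q = Polynomial.X ^ (m + n) := by
    apply Polynomial.toLaurent_injective
    rw [map_mul, hp, hq, Polynomial.toLaurent_X_pow, Nat.cast_add, T_add,
      mul_mul_mul_comm, hgh, one_mul]
  obtain ⟨r, hr, j, rfl⟩ := Polynomial.exists_eq_C_mul_X_pow_of_mul_eq_X_pow hpq
  refine ⟨r, hr, j - m, ?_⟩
  rw [Polynomial.toLaurent_C_mul_X_pow] at hp
  rw [T_sub, ← mul_assoc, hp, mul_T_assoc, add_neg_cancel, T_zero, mul_one]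

end LaurentPolynomial

namespace Susp

variable {R : Type*} [CommRing R] (f : R)

theorem suspU_mul_suspV : suspU R f * suspV R f = algebraMap R (Susp R f) f := by
  have h : Ideal.Quotient.mk _ (X 0 * X 1 - C f : MvPolynomial (Fin 2) R) = 0 :=
    Ideal.Quotient.eq_zero_iff_mem.mpr (Ideal.mem_span_singleton_self _)
  rw [map_sub, map_mul, sub_eq_zero] at h
  exact h

noncomputable def normalForm (p q : R[X]) : Susp R f :=
  Polynomial.aeval (suspU R f) p + suspV R f * Polynomial.aeval (suspV R f) q

theorem normalForm_add (p q p' q' : R[X]) :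
    normalForm f (p + p') (q + q') = normalForm f p q + normalForm f p' q' := by
  simp only [normalForm, map_add]
  ring

theorem normalForm_mul_suspU (p q : R[X]) :
    normalForm f p q * suspU R f =
      normalForm f (Polynomial.X * p + Polynomial.C (f * q.coeff 0)) (Polynomial.C f * q.divX) := by
  simp only [normalForm, map_add, map_mul, Polynomial.aeval_X, Polynomial.aeval_C]
  linear_combination (Polynomial.aeval (suspV R f) q) * suspU_mul_suspV f +
    algebraMap R _ f * Polynomial.aeval_eq_mul_aeval_divX_add (suspV R f) q

theorem normalForm_mul_suspV (p q : R[X]) :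
    normalForm f p q * suspV R f =
      normalForm f (Polynomial.C f * p.divX) (Polynomial.X * q + Polynomial.C (p.coeff 0)) := by
  simp only [normalForm, map_add, map_mul, Polynomial.aeval_X, Polynomial.aeval_C]
  linear_combination (Polynomial.aeval (suspU R f) p.divX) * suspU_mul_suspV f +
    suspV R f * Polynomial.aeval_eq_mul_aeval_divX_add (suspU R f) p

theorem exists_normalForm (s : Susp R f) : ∃ p q : R[X], normalForm f p q = s := by
  obtain ⟨P, rfl⟩ := Ideal.Quotient.mk_surjective s
  induction P using MvPolynomial.induction_on with
  | C a =>
    refine ⟨Polynomial.C a, 0, ?_⟩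
    simp only [normalForm, Polynomial.aeval_C, map_zero, mul_zero, add_zero]
    rfl
  | add P Q hP hQ =>
    obtain ⟨p, q, hpq⟩ := hP
    obtain ⟨p', q', hpq'⟩ := hQ
    exact ⟨p + p', q + q', by rw [normalForm_add, hpq, hpq', map_add]⟩
  | mul_X P i hP =>
    obtain ⟨p, q, hpq⟩ := hP
    rw [map_mul, ← hpq]
    fin_cases i
    · exact ⟨_, _, (normalForm_mul_suspU f p q).symm⟩
    · exact ⟨_, _, (normalForm_mul_suspV f p q).symm⟩

open LaurentPolynomial

noncomputable def toLaurent : Susp R f →ₐ[R] R[T;T⁻¹] :=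
  Ideal.Quotient.liftₐ _ (aeval ![T 1, LaurentPolynomial.C f * T (-1)]) fun a ha ↦ by
    obtain ⟨c, rfl⟩ := Ideal.mem_span_singleton'.mp ha
    simp [mul_comm (T 1 : R[T;T⁻¹]), mul_T_assoc]

theorem toLaurent_suspU : toLaurent f (suspU R f) = T 1 := by
  rw [toLaurent, Ideal.Quotient.liftₐ_apply]
  exact (Ideal.Quotient.lift_mk _ _ _).trans (by simp)

theorem toLaurent_suspV : toLaurent f (suspV R f) = LaurentPolynomial.C f * T (-1) := by
  rw [toLaurent, Ideal.Quotient.liftₐ_apply]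
  exact (Ideal.Quotient.lift_mk _ _ _).trans (by simp)

theorem toLaurent_aeval_suspU (p : R[X]) :
    toLaurent f (Polynomial.aeval (suspU R f) p) = Polynomial.toLaurent p := by
  rw [← Polynomial.aeval_algHom_apply, toLaurent_suspU, ← Polynomial.toLaurent_X,
    ← Polynomial.toLaurentAlg_apply, Polynomial.aeval_algHom_apply, Polynomial.aeval_X_left_apply,
    Polynomial.toLaurentAlg_apply]

theorem toLaurent_normalForm (p q : R[X]) :
    toLaurent f (normalForm f p q) =
      Polynomial.toLaurent p +
        Polynomial.aeval (LaurentPolynomial.C f * T (-1)) (Polynomial.X * q) := by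
  rw [normalForm, map_add, map_mul, toLaurent_aeval_suspU, ← Polynomial.aeval_algHom_apply,
    toLaurent_suspV, map_mul, Polynomial.aeval_X]

theorem coeff_toLaurent_normalForm_natCast (p q : R[X]) (n : ℕ) :
    (toLaurent f (normalForm f p q)).coeff n = p.coeff n := by
  rw [toLaurent_normalForm, AddMonoidAlgebra.coeff_add, Finsupp.add_apply,
    Polynomial.coeff_toLaurent_natCast, coeff_aeval_C_mul_T_neg_one]
  split_ifs with hn
  · simp [show n = 0 by omega]
  · rw [add_zero]

theorem coeff_toLaurent_normalForm_neg_succ (p q : R[X]) (j : ℕ) :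
    (toLaurent f (normalForm f p q)).coeff (-(j + 1)) = q.coeff j * f ^ (j + 1) := by
  rw [toLaurent_normalForm, AddMonoidAlgebra.coeff_add, Finsupp.add_apply,
    Polynomial.coeff_toLaurent_of_neg _ (by omega), coeff_aeval_C_mul_T_neg_one, if_pos (by omega),
    zero_add, show (-(-((j : ℤ) + 1))).toNat = j + 1 by omega, Polynomial.coeff_X_mul]

theorem toLaurent_injective (hf : f ∈ nonZeroDivisors R) : Function.Injective (toLaurent f) := by
  refine (injective_iff_map_eq_zero _).mpr fun s hs ↦ ?_
  obtain ⟨p, q, rfl⟩ := exists_normalForm f s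
  have hp : p = 0 := Polynomial.ext fun n ↦ by
    rw [← coeff_toLaurent_normalForm_natCast f p q, hs]; rfl
  have hq : q = 0 := Polynomial.ext fun j ↦ by
    rw [Polynomial.coeff_zero, ← mul_right_mem_nonZeroDivisors_eq_zero_iff (pow_mem hf (j + 1)),
      ← coeff_toLaurent_normalForm_neg_succ f p q, hs]; rfl
  simp [normalForm, hp, hq]

theorem dvd_coeff_toLaurent_of_neg (s : Susp R f) {m : ℤ} (hm : m < 0) :
    f ∣ (toLaurent f s).coeff m := by
  obtain ⟨p, q, rfl⟩ := exists_normalForm f s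
  obtain ⟨j, rfl⟩ : ∃ j : ℕ, m = -(j + 1) := ⟨(-m - 1).toNat, by omega⟩
  rw [coeff_toLaurent_normalForm_neg_succ]
  exact dvd_mul_of_dvd_right (dvd_pow_self f j.succ_ne_zero) _

theorem nonneg_of_toLaurent_eq_C_mul_T (hf : ¬IsUnit f) {s : Susp R f} {r : R} (hr : IsUnit r)
    {e : ℤ} (he : toLaurent f s = LaurentPolynomial.C r * T e) : 0 ≤ e := by
  by_contra! hneg
  have hdvd := dvd_coeff_toLaurent_of_neg f s hneg
  rw [he, coeff_C_mul_T, if_pos rfl] at hdvd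
  exact hf (isUnit_of_dvd_unit hdvd hr)

variable [IsDomain R]

theorem exists_algebraMap_eq_of_isUnit (hf0 : f ≠ 0) (hf : ¬IsUnit f)
    {s : Susp R f} (hs : IsUnit s) : ∃ r : R, IsUnit r ∧ algebraMap R (Susp R f) r = s := by
  obtain ⟨r, hr, e, he⟩ := exists_eq_C_mul_T_of_isUnit (hs.map (toLaurent f))
  have he_inv : toLaurent f (↑hs.unit⁻¹ : Susp R f) =
      LaurentPolynomial.C (↑hr.unit⁻¹ : R) * T (-e) := by
    refine left_inv_eq_right_inv (a := toLaurent f s) ?_ ?_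
    · rw [← map_mul, hs.val_inv_mul, map_one]
    · rw [he, mul_mul_mul_comm, ← map_mul, hr.mul_val_inv, ← T_add, add_neg_cancel, T_zero,
        map_one, one_mul]
  have he0 : e = 0 := le_antisymm
    (neg_nonneg.mp (nonneg_of_toLaurent_eq_C_mul_T f hf (hr.unit⁻¹).isUnit he_inv))
    (nonneg_of_toLaurent_eq_C_mul_T f hf hr he)
  refine ⟨r, hr, toLaurent_injective f (mem_nonZeroDivisors_of_ne_zero hf0) ?_⟩
  rw [AlgHom.commutes, he, he0, T_zero, mul_one, LaurentPolynomial.C_eq_algebraMap]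

theorem isUnit_iff_exists_algebraMap_eq (hf0 : f ≠ 0) (hf : ¬IsUnit f) (s : Susp R f) :
    IsUnit s ↔ ∃ r : R, IsUnit r ∧ algebraMap R (Susp R f) r = s :=
  ⟨exists_algebraMap_eq_of_isUnit f hf0 hf, by rintro ⟨r, hr, rfl⟩; exact hr.map _⟩

theorem not_isUnit_suspU (hf0 : f ≠ 0) (hf : ¬IsUnit f) : ¬IsUnit (suspU R f) := fun hU ↦ by
  obtain ⟨_, -, hr⟩ := exists_algebraMap_eq_of_isUnit f hf0 hf hU
  have h := congrArg (fun s ↦ (toLaurent f s).coeff 1) hr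
  simp [toLaurent_suspU, ← LaurentPolynomial.C_eq_algebraMap] at h

theorem not_isUnit_suspV (hf0 : f ≠ 0) (hf : ¬IsUnit f) : ¬IsUnit (suspV R f) := fun hV ↦ by
  obtain ⟨_, -, hr⟩ := exists_algebraMap_eq_of_isUnit f hf0 hf hV
  have h := congrArg (fun s ↦ (toLaurent f s).coeff (-1)) hr
  simp only [AlgHom.commutes, ← LaurentPolynomial.C_eq_algebraMap, LaurentPolynomial.C_apply,
    toLaurent_suspV, coeff_C_mul_T, if_true, neg_eq_zero, one_ne_zero, if_false] at h
  exact hf0 h.symm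

end Susp

/-- For a domain `R` and a nonzero non-invertible `f ∈ R`, the units of
`S = R[u,v]/(uv - f)` are exactly the images of the units of `R`; in particular
the images of `u` and `v` are not invertible. -/
theorem suspension_units (R : Type*) [CommRing R] [IsDomain R] (f : R)
    (hf0 : f ≠ 0) (hf : ¬ IsUnit f) :
    (∀ s : Susp R f, IsUnit s ↔ ∃ r : R, IsUnit r ∧ algebraMap R (Susp R f) r = s) ∧
    ¬ IsUnit (suspU R f) ∧ ¬ IsUnit (suspV R f) :=
  ⟨Susp.isUnit_iff_exists_algebraMap_eq f hf0 hf, Susp.not_isUnit_suspU f hf0 hf,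
    Susp.not_isUnit_suspV f hf0 hf⟩
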